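/- Let δ ∈ [0, 1/2], let Y be a {0,1}-valued random variable, let W be a random variable taking values in a finite type, and let N be a {0,1}-valued random variable with P(N = 1) = δ that is independent of the pair (Y, W). Set X = Y ⊕ N. Then H(X | W) ≥ h2(δ ⋆ h2⁻¹(H(Y | W))). (This is the evaluation of Witsenhausen's conditional entropy bound for the binary symmetric channel: among all W forming a Markov chain X − Y − W with H(Y | W) fixed, the conditional entropy H(X | W) is at least h2(δ ⋆ h2⁻¹(H(Y | W))).) -/

import Mathlib

open MeasureTheory

/-- Binary entropy function (base 2), with the convention `0 * log₂ 0 = 0`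
(automatic since `Real.logb 2 0 = 0`). -/
noncomputable def h2 (p : ℝ) : ℝ :=
  -(p * Real.logb 2 p) - (1 - p) * Real.logb 2 (1 - p)

/-- Inverse of the binary entropy function: for `q ≥ 0`, the unique `r ∈ [0, 1/2]`
with `h2 r = q` (realized as the infimum of the solution set); `0` for `q < 0`. -/
noncomputable def h2inv (q : ℝ) : ℝ :=
  if q < 0 then 0 else sInf {r : ℝ | 0 ≤ r ∧ r ≤ 1 / 2 ∧ h2 r = q}

/-- Binary convolution `a ⋆ b = a(1-b) + (1-a)b`. -/
def bconv (a b : ℝ) : ℝ := a * (1 - b) + (1 - a) * b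

/-- Shannon entropy (base 2, in bits) of a random variable `X` with values in a
finite type, with respect to the measure `μ`. -/
noncomputable def H2 {Ω S : Type*} [MeasurableSpace Ω] [Fintype S]
    (μ : Measure Ω) (X : Ω → S) : ℝ :=
  -∑ s : S, (μ (X ⁻¹' {s})).toReal * Real.logb 2 (μ (X ⁻¹' {s})).toReal

/-- Mutual information (base 2, in bits): `I(X;Y) = H(X) + H(Y) - H(X,Y)`. -/
noncomputable def MI2 {Ω S T : Type*} [MeasurableSpace Ω] [Fintype S] [Fintype T]
    (μ : Measure Ω) (X : Ω → S) (Y : Ω → T) : ℝ :=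
  H2 μ X + H2 μ Y - H2 μ (fun ω => (X ω, Y ω))

/-- Conditional entropy (base 2, in bits): `H(X|W) = H(X,W) - H(W)`. -/
noncomputable def condH2 {Ω S T : Type*} [MeasurableSpace Ω] [Fintype S] [Fintype T]
    (μ : Measure Ω) (X : Ω → S) (W : Ω → T) : ℝ :=
  H2 μ (fun ω => (X ω, W ω)) - H2 μ W

/-- Conditional mutual information (base 2, in bits):
`I(X;Y|Z) = H(X|Z) + H(Y|Z) - H(X,Y|Z)`. -/
noncomputable def condMI2 {Ω S T V : Type*} [MeasurableSpace Ω] [Fintype S] [Fintype T]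
    [Fintype V] (μ : Measure Ω) (X : Ω → S) (Y : Ω → T) (Z : Ω → V) : ℝ :=
  condH2 μ X Z + condH2 μ Y Z - condH2 μ (fun ω => (X ω, Y ω)) Z

/-!
Conditionally on `W = w` the independent noise flips `Y` with probability `δ`, so
`P(X = 1 | W = w) = δ ⋆ P(Y = 1 | W = w)`. Writing both conditional entropies as averages
`∑ P(W = w) h2(P(· = 1 | W = w))`, the bound is Jensen's inequality for the convex function
`f(q) = h2(δ ⋆ h2⁻¹(q))` (Mrs. Gerber's lemma), evaluated at `q_w = H(Y | W = w)`.

For the convexity, put `r = h2⁻¹(q)` and `h'(p) = log((1 - p) / p)`, so that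
`f'(q) = (1 - 2δ) h'(δ ⋆ r) / h'(r)`. Since `h'' = -1 / (p (1 - p))`, the derivative of this
ratio in `r` has the sign of `φ(δ ⋆ r) - (1 - 2δ) φ(r)` with `φ(p) = p (1 - p) h'(p)`, which is
nonnegative because `φ` is concave on `[0, 1/2]`, `φ(1/2) = 0` and `δ ⋆ r = (1 - 2δ) r + 2δ · 1/2`.
-/

open Real Set MeasureTheory ProbabilityTheory

lemma h2_eq_binEntropy_div : h2 = fun p ↦ binEntropy p / log 2 := by
  ext p
  simp only [h2, binEntropy, logb, log_inv]
  ring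

lemma h2_zero : h2 0 = 0 := by simp [h2_eq_binEntropy_div]

lemma h2_half : h2 (1 / 2) = 1 := by
  simp [h2_eq_binEntropy_div, (log_pos one_lt_two).ne']

lemma h2_one_sub (p : ℝ) : h2 (1 - p) = h2 p := by
  simp only [h2_eq_binEntropy_div, binEntropy_one_sub]

lemma continuous_h2 : Continuous h2 := by
  rw [h2_eq_binEntropy_div]
  exact binEntropy_continuous.div_const (log 2)

lemma strictMonoOn_h2 : StrictMonoOn h2 (Icc 0 (1 / 2)) := by
  intro x hx y hy hxy
  rw [one_div] at hx hy
  simpa only [h2_eq_binEntropy_div] using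
    div_lt_div_of_pos_right (binEntropy_strictMonoOn hx hy hxy) (log_pos one_lt_two)

lemma h2_mem_Icc {p : ℝ} (hp : p ∈ Icc (0 : ℝ) 1) : h2 p ∈ Icc (0 : ℝ) 1 := by
  rw [h2_eq_binEntropy_div, mem_Icc, div_le_one (log_pos one_lt_two)]
  exact ⟨div_nonneg (binEntropy_nonneg hp.1 hp.2) (log_pos one_lt_two).le,
    binEntropy_le_log_two⟩

noncomputable def binEntropyDeriv (p : ℝ) : ℝ := log (1 - p) - log p

lemma hasDerivAt_h2 {p : ℝ} (hp : p ∈ Ioo (0 : ℝ) 1) :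
    HasDerivAt h2 (binEntropyDeriv p / log 2) p := by
  rw [h2_eq_binEntropy_div]
  exact (hasDerivAt_binEntropy hp.1.ne' hp.2.ne).div_const (log 2)

lemma hasDerivAt_binEntropyDeriv {p : ℝ} (hp : p ∈ Ioo (0 : ℝ) 1) :
    HasDerivAt binEntropyDeriv (-(p * (1 - p))⁻¹) p := by
  have h1p : 1 - p ≠ 0 := sub_ne_zero.2 hp.2.ne'
  have h := (((hasDerivAt_id' p).const_sub 1).log h1p).fun_sub (hasDerivAt_log hp.1.ne')
  refine h.congr_deriv ?_
  have hp0 : p ≠ 0 := hp.1.ne'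
  field_simp
  ring

lemma binEntropyDeriv_pos {p : ℝ} (hp : p ∈ Ioo (0 : ℝ) (1 / 2)) : 0 < binEntropyDeriv p :=
  sub_pos.2 (log_lt_log hp.1 (by linarith [hp.2]))

lemma binEntropyDeriv_half : binEntropyDeriv (1 / 2) = 0 := by norm_num [binEntropyDeriv]

lemma antitoneOn_binEntropyDeriv : AntitoneOn binEntropyDeriv (Ioo 0 1) := by
  intro x hx y hy hxy
  have := log_le_log hx.1 hxy
  have := log_le_log (sub_pos.2 hy.2) (sub_le_sub_left hxy 1)
  simp only [binEntropyDeriv]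
  linarith

lemma bconv_eq (δ r : ℝ) : bconv δ r = δ + (1 - 2 * δ) * r := by
  unfold bconv; ring

lemma bconv_one_sub (δ r : ℝ) : bconv δ (1 - r) = 1 - bconv δ r := by
  unfold bconv; ring

lemma hasDerivAt_bconv (δ r : ℝ) : HasDerivAt (bconv δ) (1 - 2 * δ) r := by
  simpa [funext (bconv_eq δ)] using ((hasDerivAt_id r).const_mul (1 - 2 * δ)).const_add δ

lemma bconv_mem_Ioo {δ r : ℝ} (hδ : δ ∈ Icc (0 : ℝ) (1 / 2)) (hr : r ∈ Ioo (0 : ℝ) (1 / 2)) :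
    bconv δ r ∈ Ioo (0 : ℝ) 1 := by
  rw [bconv_eq]
  constructor <;> nlinarith [hδ.1, hδ.2, hr.1, hr.2]

lemma continuous_mul_one_sub_mul_binEntropyDeriv :
    Continuous fun p ↦ p * (1 - p) * binEntropyDeriv p := by
  have h : ∀ p, p * (1 - p) * binEntropyDeriv p
      = (1 - p) * negMulLog p - p * negMulLog (1 - p) := by
    intro p
    simp only [binEntropyDeriv, negMulLog]
    ring
  simp only [h]
  fun_prop

lemma hasDerivAt_mul_one_sub_mul_binEntropyDeriv {p : ℝ} (hp : p ∈ Ioo (0 : ℝ) 1) :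
    HasDerivAt (fun p ↦ p * (1 - p) * binEntropyDeriv p)
      ((1 - 2 * p) * binEntropyDeriv p - 1) p := by
  have h := (((hasDerivAt_id' p).fun_mul ((hasDerivAt_id' p).const_sub 1)).fun_mul
    (hasDerivAt_binEntropyDeriv hp))
  refine h.congr_deriv ?_
  have : p ≠ 0 := hp.1.ne'
  have : 1 - p ≠ 0 := (sub_pos.2 hp.2).ne'
  field_simp
  ring

lemma concaveOn_mul_one_sub_mul_binEntropyDeriv :
    ConcaveOn ℝ (Icc 0 (1 / 2)) fun p ↦ p * (1 - p) * binEntropyDeriv p := by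
  have hIoo : ∀ {p : ℝ}, p ∈ Ioo (0 : ℝ) (1 / 2) → p ∈ Ioo (0 : ℝ) 1 :=
    fun hp ↦ ⟨hp.1, by linarith [hp.2]⟩
  refine AntitoneOn.concaveOn_of_deriv (convex_Icc _ _)
    continuous_mul_one_sub_mul_binEntropyDeriv.continuousOn ?_ ?_ <;> rw [interior_Icc]
  · exact fun p hp ↦
      (hasDerivAt_mul_one_sub_mul_binEntropyDeriv (hIoo hp)).differentiableAt.differentiableWithinAt
  · intro x hx y hy hxy
    rw [(hasDerivAt_mul_one_sub_mul_binEntropyDeriv (hIoo hx)).deriv,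
      (hasDerivAt_mul_one_sub_mul_binEntropyDeriv (hIoo hy)).deriv]
    have hL := antitoneOn_binEntropyDeriv (hIoo hx) (hIoo hy) hxy
    have := binEntropyDeriv_pos hy
    nlinarith [hx.2, hy.2]

lemma mul_one_sub_mul_binEntropyDeriv_le_bconv {δ r : ℝ} (hδ : δ ∈ Icc (0 : ℝ) (1 / 2))
    (hr : r ∈ Icc (0 : ℝ) (1 / 2)) :
    (1 - 2 * δ) * (r * (1 - r) * binEntropyDeriv r)
      ≤ bconv δ r * (1 - bconv δ r) * binEntropyDeriv (bconv δ r) := by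
  have h := concaveOn_mul_one_sub_mul_binEntropyDeriv.2 hr (y := 1 / 2) (by norm_num)
    (by linarith [hδ.2] : 0 ≤ 1 - 2 * δ) (by linarith [hδ.1] : 0 ≤ 2 * δ) (by ring)
  simp only [smul_eq_mul, binEntropyDeriv_half, mul_zero, add_zero] at h
  rwa [show (1 - 2 * δ) * r + 2 * δ * (1 / 2) = bconv δ r by rw [bconv_eq]; ring] at h

lemma monotoneOn_binEntropyDeriv_bconv_div {δ : ℝ} (hδ : δ ∈ Icc (0 : ℝ) (1 / 2)) :
    MonotoneOn (fun r ↦ binEntropyDeriv (bconv δ r) / binEntropyDeriv r) (Ioo 0 (1 / 2)) := by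
  have hderiv : ∀ r ∈ Ioo (0 : ℝ) (1 / 2), HasDerivAt
      (fun r ↦ binEntropyDeriv (bconv δ r) / binEntropyDeriv r)
      ((bconv δ r * (1 - bconv δ r) * binEntropyDeriv (bconv δ r)
          - (1 - 2 * δ) * (r * (1 - r) * binEntropyDeriv r))
        / (r * (1 - r) * (bconv δ r * (1 - bconv δ r)) * binEntropyDeriv r ^ 2)) r := by
    intro r hr
    have hs := bconv_mem_Ioo hδ hr
    have hr' : r ∈ Ioo (0 : ℝ) 1 := ⟨hr.1, by linarith [hr.2]⟩
    refine (((hasDerivAt_binEntropyDeriv hs).comp r (hasDerivAt_bconv δ r)).div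
      (hasDerivAt_binEntropyDeriv hr') (binEntropyDeriv_pos hr).ne').congr_deriv ?_
    have : r ≠ 0 := hr'.1.ne'
    have : 1 - r ≠ 0 := (sub_pos.2 hr'.2).ne'
    have : bconv δ r ≠ 0 := hs.1.ne'
    have : 1 - bconv δ r ≠ 0 := (sub_pos.2 hs.2).ne'
    have : binEntropyDeriv r ≠ 0 := (binEntropyDeriv_pos hr).ne'
    simp only [Function.comp_apply]
    field_simp
    ring
  refine monotoneOn_of_deriv_nonneg (convex_Ioo _ _)
    (fun r hr ↦ (hderiv r hr).continuousAt.continuousWithinAt) ?_ ?_ <;> rw [interior_Ioo]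
  · exact fun r hr ↦ (hderiv r hr).differentiableAt.differentiableWithinAt
  · intro r hr
    have hs := bconv_mem_Ioo hδ hr
    rw [(hderiv r hr).deriv]
    refine div_nonneg (sub_nonneg.2 ?_) (mul_nonneg (mul_nonneg ?_ ?_) (sq_nonneg _))
    · exact mul_one_sub_mul_binEntropyDeriv_le_bconv hδ ⟨hr.1.le, hr.2.le⟩
    · nlinarith [hr.1, hr.2]
    · nlinarith [hs.1, hs.2]

lemma StrictMonoOn.continuousOn_Icc_of_image_eq {α β : Type*} [LinearOrder α]
    [TopologicalSpace α] [OrderTopology α] [LinearOrder β] [TopologicalSpace β] [OrderTopology β]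
    [DenselyOrdered β] {f : α → β} {a b : α} (hab : a < b)
    (hf : StrictMonoOn f (Icc a b)) (himg : f '' Icc a b = Icc (f a) (f b)) :
    ContinuousOn f (Icc a b) := by
  have hfab : f a < f b := hf (left_mem_Icc.2 hab.le) (right_mem_Icc.2 hab.le) hab
  intro x hx
  rcases hx.1.eq_or_lt with rfl | hax
  · exact (hf.continuousWithinAt_right_of_image_mem_nhdsWithin (Icc_mem_nhdsGE hab)
      (himg ▸ Icc_mem_nhdsGE hfab)).mono Icc_subset_Ici_self
  rcases hx.2.eq_or_lt with rfl | hxb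
  · exact (hf.continuousWithinAt_left_of_image_mem_nhdsWithin (Icc_mem_nhdsLE hab)
      (himg ▸ Icc_mem_nhdsLE hfab)).mono Icc_subset_Iic_self
  refine (hf.continuousAt_of_image_mem_nhds (Icc_mem_nhds hax hxb) ?_).continuousWithinAt
  rw [himg]
  exact Icc_mem_nhds (hf (left_mem_Icc.2 hab.le) hx hax) (hf hx (right_mem_Icc.2 hab.le) hxb)

lemma h2inv_spec {q : ℝ} (hq : q ∈ Icc (0 : ℝ) 1) :
    h2inv q ∈ Icc (0 : ℝ) (1 / 2) ∧ h2 (h2inv q) = q := by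
  obtain ⟨r, hr, hrq⟩ : ∃ r ∈ Icc (0 : ℝ) (1 / 2), h2 r = q := by
    have hivt := intermediate_value_Icc (by norm_num : (0 : ℝ) ≤ 1 / 2) continuous_h2.continuousOn
    rw [h2_zero, h2_half] at hivt
    exact hivt hq
  have hsol : {r' : ℝ | 0 ≤ r' ∧ r' ≤ 1 / 2 ∧ h2 r' = q} = {r} := by
    ext r'
    refine ⟨fun ⟨h0, h1, he⟩ ↦ strictMonoOn_h2.injOn ⟨h0, h1⟩ hr (he.trans hrq.symm), ?_⟩
    rintro rfl
    exact ⟨hr.1, hr.2, hrq⟩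
  rw [h2inv, if_neg (not_lt.2 hq.1), hsol, csInf_singleton]
  exact ⟨hr, hrq⟩

lemma h2inv_mem_Icc {q : ℝ} (hq : q ∈ Icc (0 : ℝ) 1) : h2inv q ∈ Icc (0 : ℝ) (1 / 2) :=
  (h2inv_spec hq).1

lemma h2_h2inv {q : ℝ} (hq : q ∈ Icc (0 : ℝ) 1) : h2 (h2inv q) = q :=
  (h2inv_spec hq).2

lemma h2inv_h2 {p : ℝ} (hp : p ∈ Icc (0 : ℝ) (1 / 2)) : h2inv (h2 p) = p := by
  have hq := h2_mem_Icc ⟨hp.1, hp.2.trans (by norm_num)⟩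
  exact strictMonoOn_h2.injOn (h2inv_mem_Icc hq) hp (h2_h2inv hq)

lemma strictMonoOn_h2inv : StrictMonoOn h2inv (Icc 0 1) := by
  intro x hx y hy hxy
  by_contra! h
  have := strictMonoOn_h2.monotoneOn (h2inv_mem_Icc hy) (h2inv_mem_Icc hx) h
  rw [h2_h2inv hx, h2_h2inv hy] at this
  linarith

lemma h2inv_mem_Ioo {q : ℝ} (hq : q ∈ Ioo (0 : ℝ) 1) : h2inv q ∈ Ioo (0 : ℝ) (1 / 2) := by
  have hq' : q ∈ Icc (0 : ℝ) 1 := Ioo_subset_Icc_self hq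
  obtain ⟨h0, h1⟩ := h2inv_mem_Icc hq'
  refine ⟨h0.lt_of_ne ?_, h1.lt_of_ne ?_⟩ <;> intro h
  · have := h2_h2inv hq'; rw [← h, h2_zero] at this; linarith [hq.1]
  · have := h2_h2inv hq'; rw [h, h2_half] at this; linarith [hq.2]

lemma image_h2inv_Icc : h2inv '' Icc 0 1 = Icc 0 (1 / 2) := by
  refine (mapsTo_iff_image_subset.1 fun q hq ↦ h2inv_mem_Icc hq).antisymm fun p hp ↦ ?_
  exact ⟨h2 p, h2_mem_Icc ⟨hp.1, hp.2.trans (by norm_num)⟩, h2inv_h2 hp⟩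

lemma continuousOn_h2inv : ContinuousOn h2inv (Icc 0 1) := by
  refine strictMonoOn_h2inv.continuousOn_Icc_of_image_eq one_pos ?_
  rw [image_h2inv_Icc, ← h2_zero, ← h2_half, h2inv_h2 (by norm_num), h2inv_h2 (by norm_num),
    h2_zero, h2_half]

lemma hasDerivAt_h2inv {q : ℝ} (hq : q ∈ Ioo (0 : ℝ) 1) :
    HasDerivAt h2inv (log 2 / binEntropyDeriv (h2inv q)) q := by
  have hr := h2inv_mem_Ioo hq
  have hd := hasDerivAt_h2 (p := h2inv q) ⟨hr.1, by linarith [hr.2]⟩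
  have hne : binEntropyDeriv (h2inv q) / log 2 ≠ 0 :=
    (div_pos (binEntropyDeriv_pos hr) (log_pos one_lt_two)).ne'
  rw [← inv_div]
  exact hd.of_local_left_inverse (continuousOn_h2inv.continuousAt (Icc_mem_nhds hq.1 hq.2)) hne
    (Filter.eventually_of_mem (Ioo_mem_nhds hq.1 hq.2) fun y hy ↦ h2_h2inv (Ioo_subset_Icc_self hy))

lemma hasDerivAt_h2_bconv_h2inv {δ q : ℝ} (hδ : δ ∈ Icc (0 : ℝ) (1 / 2)) (hq : q ∈ Ioo (0 : ℝ) 1) :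
    HasDerivAt (fun q ↦ h2 (bconv δ (h2inv q)))
      ((1 - 2 * δ) * (binEntropyDeriv (bconv δ (h2inv q)) / binEntropyDeriv (h2inv q))) q := by
  have hr := h2inv_mem_Ioo hq
  refine ((hasDerivAt_h2 (bconv_mem_Ioo hδ hr)).comp q
    ((hasDerivAt_bconv δ _).comp q (hasDerivAt_h2inv hq))).congr_deriv ?_
  have : binEntropyDeriv (h2inv q) ≠ 0 := (binEntropyDeriv_pos hr).ne'
  have : log 2 ≠ 0 := (log_pos one_lt_two).ne'
  field_simp

/-- Mrs. Gerber's lemma (Wyner–Ziv). -/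
theorem convexOn_h2_bconv_h2inv {δ : ℝ} (hδ : δ ∈ Icc (0 : ℝ) (1 / 2)) :
    ConvexOn ℝ (Icc 0 1) fun q ↦ h2 (bconv δ (h2inv q)) := by
  have hbconv : Continuous (bconv δ) := by unfold bconv; fun_prop
  have hcont : ContinuousOn (fun q ↦ h2 (bconv δ (h2inv q))) (Icc 0 1) :=
    continuous_h2.comp_continuousOn (hbconv.comp_continuousOn continuousOn_h2inv)
  refine MonotoneOn.convexOn_of_deriv (convex_Icc _ _) hcont ?_ ?_ <;> rw [interior_Icc]
  · exact fun q hq ↦ (hasDerivAt_h2_bconv_h2inv hδ hq).differentiableAt.differentiableWithinAt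
  · intro x hx y hy hxy
    rw [(hasDerivAt_h2_bconv_h2inv hδ hx).deriv, (hasDerivAt_h2_bconv_h2inv hδ hy).deriv]
    exact mul_le_mul_of_nonneg_left
      (monotoneOn_binEntropyDeriv_bconv_div hδ (h2inv_mem_Ioo hx) (h2inv_mem_Ioo hy)
        (strictMonoOn_h2inv.monotoneOn (Ioo_subset_Icc_self hx) (Ioo_subset_Icc_self hy) hxy))
      (by linarith [hδ.2])

lemma h2_bconv_h2inv_h2 (δ : ℝ) {p : ℝ} (hp : p ∈ Icc (0 : ℝ) 1) :
    h2 (bconv δ (h2inv (h2 p))) = h2 (bconv δ p) := by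
  rcases le_total p (1 / 2) with h | h
  · rw [h2inv_h2 ⟨hp.1, h⟩]
  · rw [← h2_one_sub p, h2inv_h2 ⟨by linarith [hp.2], by linarith⟩, bconv_one_sub, h2_one_sub]

lemma mul_binEntropy_div_add (a b : ℝ) :
    (a + b) * binEntropy (a / (a + b)) = negMulLog a + negMulLog b - negMulLog (a + b) := by
  rcases eq_or_ne (a + b) 0 with hab | hab
  · obtain rfl : b = -a := by linarith
    simp [negMulLog, log_neg_eq_log]
  have hb : 1 - a / (a + b) = b / (a + b) := by field_simp; ring
  have ha' := negMulLog_mul (a / (a + b)) (a + b)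
  have hb' := negMulLog_mul (b / (a + b)) (a + b)
  rw [div_mul_cancel₀ a hab] at ha'
  rw [div_mul_cancel₀ b hab] at hb'
  rw [binEntropy_eq_negMulLog_add_negMulLog_one_sub, hb, ha', hb']
  field_simp
  ring

lemma neg_mul_logb_two (x : ℝ) : -(x * logb 2 x) = negMulLog x / log 2 := by
  simp only [negMulLog, logb]
  ring

lemma H2_eq_sum_negMulLog {Ω S : Type*} [MeasurableSpace Ω] [Fintype S] (μ : Measure Ω)
    (X : Ω → S) : H2 μ X = (∑ s, negMulLog (μ (X ⁻¹' {s})).toReal) / log 2 := by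
  simp only [H2, ← Finset.sum_neg_distrib, neg_mul_logb_two, Finset.sum_div]

section ConditionalEntropy

variable {Ω TW : Type*} [MeasurableSpace Ω] [MeasurableSpace TW]
  [MeasurableSingletonClass TW] {μ : Measure Ω}

lemma toReal_measure_preimage_eq_add [IsFiniteMeasure μ] {X : Ω → Bool} {W : Ω → TW}
    (hX : Measurable X) (hW : Measurable W) (w : TW) :
    (μ (W ⁻¹' {w})).toReal = (μ ((fun ω ↦ (X ω, W ω)) ⁻¹' {(true, w)})).toReal
      + (μ ((fun ω ↦ (X ω, W ω)) ⁻¹' {(false, w)})).toReal := by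
  have hunion : W ⁻¹' {w} = (fun ω ↦ (X ω, W ω)) ⁻¹' {(true, w)}
      ∪ (fun ω ↦ (X ω, W ω)) ⁻¹' {(false, w)} := by
    ext ω
    cases h : X ω <;> simp [h]
  rw [hunion]
  refine measureReal_union ?_ ((hX.prodMk hW) (measurableSet_singleton _))
  exact Set.disjoint_left.2 fun ω h1 h2 ↦ by simp_all

lemma toReal_cond_preimage {X : Ω → Bool} {W : Ω → TW} (hW : Measurable W) (x : Bool) (w : TW) :
    (μ[X ⁻¹' {x} | W ⁻¹' {w}]).toReal
      = (μ ((fun ω ↦ (X ω, W ω)) ⁻¹' {(x, w)})).toReal / (μ (W ⁻¹' {w})).toReal := by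
  rw [cond_apply (hW (measurableSet_singleton w)), ENNReal.toReal_mul, ENNReal.toReal_inv,
    inv_mul_eq_div]
  congr 3
  ext ω
  simp [and_comm]

theorem condH2_eq_sum_mul_h2_cond [Fintype TW] [IsFiniteMeasure μ] {X : Ω → Bool} {W : Ω → TW}
    (hX : Measurable X) (hW : Measurable W) :
    condH2 μ X W = ∑ w, (μ (W ⁻¹' {w})).toReal * h2 (μ[X ⁻¹' {true} | W ⁻¹' {w}]).toReal := by
  have hterm : ∀ w, (μ (W ⁻¹' {w})).toReal * h2 (μ[X ⁻¹' {true} | W ⁻¹' {w}]).toReal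
      = (negMulLog (μ ((fun ω ↦ (X ω, W ω)) ⁻¹' {(true, w)})).toReal
          + negMulLog (μ ((fun ω ↦ (X ω, W ω)) ⁻¹' {(false, w)})).toReal
          - negMulLog (μ (W ⁻¹' {w})).toReal) / log 2 := by
    intro w
    rw [toReal_cond_preimage hW, h2_eq_binEntropy_div, toReal_measure_preimage_eq_add hX hW,
      mul_div_assoc', mul_binEntropy_div_add]
  rw [condH2, H2_eq_sum_negMulLog, H2_eq_sum_negMulLog, Fintype.sum_prod_type, Finset.sum_comm,
    ← sub_div, ← Finset.sum_sub_distrib, Finset.sum_div]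
  simp only [Fintype.sum_bool, hterm]

end ConditionalEntropy

section BinarySymmetricChannel

variable {Ω TW : Type*} [MeasurableSpace Ω] [MeasurableSpace TW] [MeasurableSingletonClass TW]
  {μ : Measure Ω} {Y N : Ω → Bool} {W : Ω → TW}

lemma toReal_measure_xor_preimage [IsFiniteMeasure μ] (hY : Measurable Y) (hW : Measurable W)
    (hN : Measurable N)
    (hindep : ∀ (n y : Bool) (w : TW),
      (μ (N ⁻¹' {n} ∩ (fun ω ↦ (Y ω, W ω)) ⁻¹' {(y, w)})).toReal
        = (μ (N ⁻¹' {n})).toReal * (μ ((fun ω ↦ (Y ω, W ω)) ⁻¹' {(y, w)})).toReal) (w : TW) :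
    (μ ((fun ω ↦ (Y ω ^^ N ω, W ω)) ⁻¹' {(true, w)})).toReal
      = (μ (N ⁻¹' {true})).toReal * (μ ((fun ω ↦ (Y ω, W ω)) ⁻¹' {(false, w)})).toReal
        + (μ (N ⁻¹' {false})).toReal * (μ ((fun ω ↦ (Y ω, W ω)) ⁻¹' {(true, w)})).toReal := by
  have hunion : (fun ω ↦ (Y ω ^^ N ω, W ω)) ⁻¹' {(true, w)}
      = (N ⁻¹' {true} ∩ (fun ω ↦ (Y ω, W ω)) ⁻¹' {(false, w)})
        ∪ (N ⁻¹' {false} ∩ (fun ω ↦ (Y ω, W ω)) ⁻¹' {(true, w)}) := by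
    ext ω
    cases hy : Y ω <;> cases hn : N ω <;> simp [hy, hn]
  rw [← hindep, ← hindep, hunion]
  refine measureReal_union ?_
    ((hN (measurableSet_singleton _)).inter ((hY.prodMk hW) (measurableSet_singleton _)))
  exact Set.disjoint_left.2 fun ω h1 h2 ↦ by simp_all

lemma toReal_cond_xor [IsProbabilityMeasure μ] {δ : ℝ} (hY : Measurable Y) (hW : Measurable W)
    (hN : Measurable N) (hNp : (μ (N ⁻¹' {true})).toReal = δ)
    (hindep : ∀ (n y : Bool) (w : TW),
      (μ (N ⁻¹' {n} ∩ (fun ω ↦ (Y ω, W ω)) ⁻¹' {(y, w)})).toReal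
        = (μ (N ⁻¹' {n})).toReal * (μ ((fun ω ↦ (Y ω, W ω)) ⁻¹' {(y, w)})).toReal)
    {w : TW} (hw : (μ (W ⁻¹' {w})).toReal ≠ 0) :
    (μ[(fun ω ↦ Y ω ^^ N ω) ⁻¹' {true} | W ⁻¹' {w}]).toReal
      = bconv δ (μ[Y ⁻¹' {true} | W ⁻¹' {w}]).toReal := by
  have hNf : (μ (N ⁻¹' {false})).toReal = 1 - δ := by
    have h := probReal_compl_eq_one_sub (μ := μ) (hN (measurableSet_singleton true))
    rw [← preimage_compl, Bool.compl_singleton, Bool.not_true] at h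
    rw [← hNp]
    exact h
  rw [toReal_cond_preimage hW, toReal_cond_preimage hW, toReal_measure_xor_preimage hY hW hN hindep,
    hNp, hNf]
  rw [toReal_measure_preimage_eq_add hY hW] at hw ⊢
  unfold bconv
  field_simp
  ring

end BinarySymmetricChannel

/-- Witsenhausen's conditional entropy bound for the binary symmetric channel:
if `N ~ Ber(δ)` is independent of `(Y, W)` and `X = Y ⊕ N`, then
`H(X | W) ≥ h2(δ ⋆ h2⁻¹(H(Y | W)))`. -/
theorem stmt16 {Ω TW : Type*} [MeasurableSpace Ω] [Fintype TW]
    [MeasurableSpace TW] [MeasurableSingletonClass TW]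
    (μ : Measure Ω) [IsProbabilityMeasure μ]
    (δ : ℝ) (hδ : δ ∈ Set.Icc (0 : ℝ) (1 / 2))
    (Y : Ω → Bool) (W : Ω → TW) (N : Ω → Bool)
    (hY : Measurable Y) (hW : Measurable W) (hN : Measurable N)
    (hNp : (μ (N ⁻¹' {true})).toReal = δ)
    (hindep : ∀ (n y : Bool) (w : TW),
      (μ (N ⁻¹' {n} ∩ (fun ω => (Y ω, W ω)) ⁻¹' {(y, w)})).toReal
        = (μ (N ⁻¹' {n})).toReal * (μ ((fun ω => (Y ω, W ω)) ⁻¹' {(y, w)})).toReal) :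
    h2 (bconv δ (h2inv (condH2 μ Y W))) ≤ condH2 μ (fun ω => Y ω ^^ N ω) W := by
  have hX : Measurable fun ω ↦ Y ω ^^ N ω := by fun_prop
  set P : TW → ℝ := fun w ↦ (μ (W ⁻¹' {w})).toReal
  have hprob : ∀ w, (μ[Y ⁻¹' {true} | W ⁻¹' {w}]).toReal ∈ Icc (0 : ℝ) 1 :=
    fun w ↦ ⟨ENNReal.toReal_nonneg, measureReal_le_one⟩
  have hterm : ∀ w, P w * h2 (bconv δ (h2inv (h2 (μ[Y ⁻¹' {true} | W ⁻¹' {w}]).toReal)))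
      = P w * h2 (μ[(fun ω ↦ Y ω ^^ N ω) ⁻¹' {true} | W ⁻¹' {w}]).toReal := by
    intro w
    rcases eq_or_ne (P w) 0 with hw | hw
    · rw [hw, zero_mul, zero_mul]
    · rw [h2_bconv_h2inv_h2 δ (hprob w), toReal_cond_xor hY hW hN hNp hindep hw]
  have hP : ∑ w, P w = 1 := by
    refine (sum_measureReal_preimage_singleton (μ := μ) Finset.univ
      fun w _ ↦ hW (measurableSet_singleton w)).trans ?_
    simp
  rw [condH2_eq_sum_mul_h2_cond hY hW, condH2_eq_sum_mul_h2_cond hX hW]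
  calc _ ≤ ∑ w, P w * h2 (bconv δ (h2inv (h2 (μ[Y ⁻¹' {true} | W ⁻¹' {w}]).toReal))) :=
        (convexOn_h2_bconv_h2inv hδ).map_sum_le (fun w _ ↦ ENNReal.toReal_nonneg) hP
          fun w _ ↦ h2_mem_Icc (hprob w)
    _ = _ := Finset.sum_congr rfl fun w _ ↦ hterm w
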